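/- Let κ be an uncountable regular cardinal. If there is a superthin κ-Kurepa subtree S of ^{<κ}κ, then there is a κ-Kurepa subtree T of ^{<κ}κ such that the set [T] is a retract of ^κκ. Moreover, if S is pruned, then T can be chosen so that S ⊆ T. -/

import Mathlib

open Cardinal Set

noncomputable section

namespace GBaire

universe u

/-- The underlying well-ordered set of the cardinal `κ`, i.e. the type of ordinals `< κ`. -/
abbrev K (κ : Cardinal.{u}) : Type u := κ.ord.ToType

/-- The set `^{<κ}κ` of all functions from a proper initial segment of `κ` to `κ`. -/
abbrev PreFun (κ : Cardinal.{u}) : Type u := Σ α : K κ, ({β : K κ // β < α} → K κ)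

variable (κ : Cardinal.{u})

/-- The restriction `x ↾ α` of a function `x ∈ ^κκ` to the initial segment determined by `α`. -/
def resT (x : K κ → K κ) (α : K κ) : PreFun κ := ⟨α, fun β => x β.1⟩

/-- The restriction of `s ∈ ^{<κ}κ` to (the minimum of its domain and) `γ`.  When
`γ ≤ s.1` this is the restriction `s ↾ γ`; otherwise it equals `s`. -/
def cut (s : PreFun κ) (γ : K κ) : PreFun κ :=
  ⟨min γ s.1, fun β => s.2 ⟨β.1, lt_of_lt_of_le β.2 (min_le_right _ _)⟩⟩

/-- A subtree of `^{<κ}κ`: a set of elements of `^{<κ}κ` closed under restrictions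
to smaller ordinals. -/
def IsSubtree (T : Set (PreFun κ)) : Prop :=
  ∀ s ∈ T, ∀ γ : K κ, γ < s.1 → cut κ s γ ∈ T

/-- The `α`-th level `T(α)` of `T`. -/
def level (T : Set (PreFun κ)) (α : K κ) : Set (PreFun κ) := {s ∈ T | s.1 = α}

/-- The set `[T]` of cofinal branches of `T`, i.e. all `x ∈ ^κκ` all of whose
restrictions lie in `T`. -/
def branches (T : Set (PreFun κ)) : Set (K κ → K κ) := {x | ∀ α : K κ, resT κ x α ∈ T}

/-- `T` is a `κ`-Kurepa subtree of `^{<κ}κ`: a subtree all of whose levels are nonempty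
of cardinality `< κ` and with at least `κ⁺` many cofinal branches. -/
def IsKurepa (T : Set (PreFun κ)) : Prop :=
  IsSubtree κ T ∧ (∀ α : K κ, (level κ T α).Nonempty ∧ #(level κ T α) < κ) ∧
    Order.succ κ ≤ #(branches κ T)

/-- The basic open set `N_s = {x ∈ ^κκ | s ⊆ x}`. -/
def Nbhd (s : PreFun κ) : Set (K κ → K κ) := {x | resT κ x s.1 = s}

/-- The topology of the generalized Baire space `^κκ`, generated by the sets `N_s`. -/
def baire : TopologicalSpace (K κ → K κ) :=
  TopologicalSpace.generateFrom {U | ∃ s : PreFun κ, U = Nbhd κ s}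

/-- `X` is a continuous image of `^κκ`: there is a continuous surjection from `^κκ`
onto `X` (with the subspace topology). -/
def IsContImage (X : Set (K κ → K κ)) : Prop :=
  letI := baire κ
  ∃ f : (K κ → K κ) → X, Continuous f ∧ Function.Surjective f

/-- `X` is a retract of `^κκ`: there is a continuous `r : ^κκ → ^κκ` with range
contained in `X` that is the identity on `X`. -/
def IsRetract (X : Set (K κ → K κ)) : Prop :=
  letI := baire κ
  ∃ r : (K κ → K κ) → (K κ → K κ),
    Continuous r ∧ Set.range r ⊆ X ∧ ∀ x ∈ X, r x = x

/-- `y` is an isolated point of `Y ⊆ ^κκ`. -/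
def IsIsolatedIn (Y : Set (K κ → K κ)) (y : K κ → K κ) : Prop :=
  y ∈ Y ∧ ∃ α : K κ, Nbhd κ (resT κ y α) ∩ Y = {y}

/-- `T` is slim: `|T(α)| ≤ |α|` for all sufficiently large `α < κ`. -/
def IsSlim (T : Set (PreFun κ)) : Prop :=
  ∃ α₀ : K κ, ∀ α : K κ, α₀ ≤ α → #(level κ T α) ≤ #{β : K κ // β < α}

/-- `C ⊆ κ` is closed: it contains every least upper bound of a nonempty subset of `C`. -/
def ClosedIn (C : Set (K κ)) : Prop :=
  ∀ A ⊆ C, A.Nonempty → ∀ x : K κ, IsLUB A x → x ∈ C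

/-- `C ⊆ κ` is unbounded in `κ`. -/
def UnboundedIn (C : Set (K κ)) : Prop := ∀ x : K κ, ∃ y ∈ C, x < y

/-- `S ⊆ κ` is stationary in `κ`: it meets every closed unbounded subset of `κ`. -/
def Stationary (S : Set (K κ)) : Prop :=
  ∀ C : Set (K κ), ClosedIn κ C → UnboundedIn κ C → (S ∩ C).Nonempty

/-- `T` is stationary slim: `|T(α)| ≤ |α|` for stationarily many `α < κ`. -/
def StatSlim (T : Set (PreFun κ)) : Prop :=
  Stationary κ {α : K κ | #(level κ T α) ≤ #{β : K κ // β < α}}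

/-- `α` is a limit ordinal (as an element of `κ`): it is neither the least element
nor a successor. -/
def IsLimitElt (α : K κ) : Prop :=
  (∃ β : K κ, β < α) ∧ ∀ β : K κ, β < α → ∃ γ : K κ, β < γ ∧ γ < α

/-- The boundary `∂T` of a subtree `T`: the minimal elements of `^{<κ}κ \ T`. -/
def boundary (T : Set (PreFun κ)) : Set (PreFun κ) :=
  {t | t ∉ T ∧ ∀ γ : K κ, γ < t.1 → cut κ t γ ∈ T}

/-- `T` is superthin: for every limit ordinal `α < κ`, the set of elements of
`T ∪ ∂T` with domain `α` has cardinality `< κ`. -/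
def IsSuperthin (T : Set (PreFun κ)) : Prop :=
  ∀ α : K κ, IsLimitElt κ α → #{s ∈ T ∪ boundary κ T | s.1 = α} < κ

/-- `T` is pruned: every element of `T` has a proper extension in `T`. -/
def IsPruned (T : Set (PreFun κ)) : Prop :=
  ∀ s ∈ T, ∃ t ∈ T, s.1 < t.1 ∧ cut κ t s.1 = s

/-- `T` is `<κ`-closed: the union of every (strictly increasing with respect to proper
end-extension) sequence of elements of `T` indexed by an ordinal `< κ` again lies in `T`.
Here `u` is the union of the sequence `s` iff the domain of `u` is the least upper bound
of the domains of the `s ξ` and every `s ξ` is a restriction of `u`. -/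
def IsLtClosed (T : Set (PreFun κ)) : Prop :=
  ∀ (γ : K κ) (s : {ξ : K κ // ξ < γ} → PreFun κ),
    (∀ ξ ζ : {ξ : K κ // ξ < γ}, ξ < ζ → (s ξ).1 < (s ζ).1 ∧ cut κ (s ζ) (s ξ).1 = s ξ) →
    (∀ ξ, s ξ ∈ T) →
    ∀ u : PreFun κ, IsLUB (Set.range fun ξ => (s ξ).1) u.1 →
      (∀ ξ, cut κ u (s ξ).1 = s ξ) → u ∈ T

/-- `T` contains a Cantor subtree. -/
def HasCantorSubtree (T : Set (PreFun κ)) : Prop :=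
  ∃ (l : ℕ → K κ) (lam : K κ), StrictMono l ∧ IsLUB (Set.range l) lam ∧
    (level κ T lam).Nonempty ∧
    ∃ B ⊆ level κ T lam, ¬ B.Countable ∧
      ∀ n : ℕ, ((fun t => cut κ t (l n)) '' B).Countable

/-- proper end-extension on `^{<κ}κ`. -/
def pext (s t : PreFun κ) : Prop := s.1 < t.1 ∧ cut κ t s.1 = s

/-- A set `A ⊆ ^{<κ}κ`, regarded as a tree under proper end-extension, is trivially
coherent: it is order-isomorphic to a subtree of `^{<λ}2` (for `λ` its height) all of
whose elements `t` satisfy that `t⁻¹{0}` is finite.  (Here the comparison tree is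
realized as a subtree `U` of `^{<κ}κ` taking only the values `0` and `1`, i.e. values
with at most one predecessor, such that each `u ∈ U` takes the value `0`, i.e. the
value with no predecessor, only finitely often.) -/
def TriviallyCoherent (A : Set (PreFun κ)) : Prop :=
  ∃ U : Set (PreFun κ),
    IsSubtree κ U ∧
    (∀ u ∈ U, ∀ β : {b : K κ // b < u.1}, #{γ : K κ // γ < u.2 β} ≤ 1) ∧
    (∀ u ∈ U, {β : {b : K κ // b < u.1} | ¬ ∃ γ : K κ, γ < u.2 β}.Finite) ∧
    ∃ f : A → U, Function.Bijective f ∧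
      ∀ s t : A, pext κ s.1 t.1 ↔ pext κ (f s).1 (f t).1

/-- `T` is locally coherent: each of its proper initial segments `T ∩ ^{<α}κ` is
trivially coherent. -/
def LocallyCoherent (T : Set (PreFun κ)) : Prop :=
  ∀ α : K κ, TriviallyCoherent κ {s ∈ T | s.1 < α}

end GBaire

/-!
Fix `z < κ`. The retraction `r` keeps `x β` as long as `x ↾ (β + 1)` lies on a cofinal
branch of `S` and continues with the constant value `z` from the first `β` where this fails.
Since `r x ↾ α` depends only on `x ↾ α`, `r` is continuous, and since `r ∘ r = r`, it fixes
every branch of the tree `T₀` of restrictions of its values; as `[S ∪ T₀] = [S] ∪ [T₀]`, `r`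
retracts `^κκ` onto `[S ∪ T₀]`. The node at which `x` leaves the branches of `S` lies in `S`,
or in `∂S` at a limit level, so superthinness and the regularity of `κ` bound the levels of
`T₀` below `κ`.
-/

namespace GBaire

section

variable {κ : Cardinal.{u}} {x y : K κ → K κ} {α β γ δ : K κ} {S T : Set (PreFun κ)}

theorem resT_eq_resT_iff : resT κ x α = resT κ y α ↔ ∀ β < α, x β = y β := by
  simp [resT, funext_iff]

theorem cut_resT (h : γ ≤ α) : cut κ (resT κ x α) γ = resT κ x γ := by
  change resT κ x (min γ α) = _
  rw [min_eq_left h]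

theorem resT_mem_of_eqOn_lt (hx : x ∈ branches κ S) (h : ∀ γ < α, x γ = y γ) :
    resT κ y α ∈ S :=
  resT_eq_resT_iff.2 h ▸ hx α

theorem IsSubtree.resT_mem (hT : IsSubtree κ T) (h : resT κ x δ ∈ T) (hle : γ ≤ δ) :
    resT κ x γ ∈ T := by
  rcases hle.lt_or_eq with hlt | rfl
  · simpa only [cut_resT hlt.le] using hT _ h γ hlt
  · exact h

theorem IsSubtree.union (hS : IsSubtree κ S) (hT : IsSubtree κ T) : IsSubtree κ (S ∪ T) := by
  rintro s (hs | hs) γ hγ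
  exacts [Or.inl (hS s hs γ hγ), Or.inr (hT s hs γ hγ)]

theorem level_union : level κ (S ∪ T) α = level κ S α ∪ level κ T α :=
  sep_union

theorem branches_mono (h : S ⊆ T) : branches κ S ⊆ branches κ T :=
  fun _ hx α => h (hx α)

theorem branches_union_subset (hS : IsSubtree κ S) (hT : IsSubtree κ T) :
    branches κ (S ∪ T) ⊆ branches κ S ∪ branches κ T := by
  refine fun x hx => or_iff_not_imp_left.2 fun hxS α => ?_
  obtain ⟨γ, hγ⟩ : ∃ γ, resT κ x γ ∉ S := by simpa [branches] using hxS
  have hmax : resT κ x (max γ α) ∈ T :=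
    (hx _).resolve_left fun h => hγ (hS.resT_mem h (le_max_left _ _))
  exact hT.resT_mem hmax (le_max_right _ _)

theorem IsKurepa.branches_nonempty (hS : IsKurepa κ S) : (branches κ S).Nonempty :=
  nonempty_coe_sort.1 <| mk_ne_zero_iff.1 <|
    ((zero_le.trans_lt (Order.lt_succ κ)).trans_le hS.2.2).ne'

theorem mk_setOf_fst_le_lt (hκ : κ.IsRegular) {A : Set (PreFun κ)}
    (hA : ∀ α, #(level κ A α) < κ) (β : K κ) : #{t ∈ A | t.1 ≤ β} < κ := by
  have hcover : {t ∈ A | t.1 ≤ β} = ⋃ α : Iic β, level κ A α := by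
    ext t
    simp [level, and_comm]
  have hIic : #(Iic β) < κ := by
    rw [← Iio_insert]
    exact mk_insert_le.trans_lt <| add_lt_of_lt hκ.aleph0_le (by simpa using mk_Iio_lt β)
      (one_lt_aleph0.trans_le hκ.aleph0_le)
  rw [hcover]
  exact mk_iUnion_le_sum_mk.trans_lt (sum_lt_of_isRegular hκ hIic fun α => hA α)

/-- `r` is 1-Lipschitz for the standard ultrametric on `^κκ`. -/
def Nonexpanding (r : (K κ → K κ) → K κ → K κ) : Prop :=
  ∀ x y α, resT κ x α = resT κ y α → resT κ (r x) α = resT κ (r y) α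

def rangeTree (r : (K κ → K κ) → K κ → K κ) : Set (PreFun κ) :=
  {s | ∃ x, resT κ (r x) s.1 = s}

variable {r : (K κ → K κ) → K κ → K κ}

theorem isSubtree_rangeTree : IsSubtree κ (rangeTree r) := by
  rintro s ⟨x, hx⟩ γ hγ
  rw [← hx, cut_resT (hγ.le : γ ≤ s.1)]
  exact ⟨x, rfl⟩

theorem apply_mem_branches_rangeTree (x : K κ → K κ) : r x ∈ branches κ (rangeTree r) :=
  fun _ => ⟨x, rfl⟩

theorem Nonexpanding.continuous (hr : Nonexpanding r) :
    @Continuous _ _ (baire κ) (baire κ) r := by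
  let _ := baire κ
  rw [baire, continuous_generateFrom_iff]
  rintro _ ⟨s, rfl⟩
  refine isOpen_iff_forall_mem_open.2 fun x hx => ⟨Nbhd κ (resT κ x s.1), ?_,
    TopologicalSpace.isOpen_generateFrom_of_mem ⟨_, rfl⟩, rfl⟩
  exact fun y hy => (hr y x s.1 hy).trans hx

/-- `[rangeTree r]` is the closure of the range of `r`. -/
theorem Nonexpanding.apply_eq_self [NoMaxOrder (K κ)] (hr : Nonexpanding r)
    (hrr : ∀ x, r (r x) = r x) (hx : x ∈ branches κ (rangeTree r)) : r x = x := by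
  funext β
  obtain ⟨α, hβα⟩ := exists_gt β
  obtain ⟨w, hw⟩ : ∃ w, resT κ (r w) α = resT κ x α := hx α
  have hα : resT κ (r x) α = resT κ x α := by
    rw [← hr _ _ _ hw, hrr]
    exact hw
  exact resT_eq_resT_iff.1 hα β hβα

theorem isRetract_branches_union_rangeTree [NoMaxOrder (K κ)] (hS : IsSubtree κ S)
    (hr : Nonexpanding r) (hrr : ∀ x, r (r x) = r x) (hfix : ∀ x ∈ branches κ S, r x = x) :
    IsRetract κ (branches κ (S ∪ rangeTree r)) :=
  ⟨r, hr.continuous,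
    range_subset_iff.2 fun x => branches_mono subset_union_right (apply_mem_branches_rangeTree x),
    fun x hx => (branches_union_subset hS isSubtree_rangeTree hx).elim (hfix x)
      (fun hx => hr.apply_eq_self hrr hx)⟩

variable (S) in
def FollowsBranch (x : K κ → K κ) (β : K κ) : Prop :=
  ∃ b ∈ branches κ S, ∀ γ ≤ β, b γ = x γ

theorem FollowsBranch.mono (h : FollowsBranch S x β) (hγ : γ ≤ β) : FollowsBranch S x γ :=
  let ⟨b, hb, hbx⟩ := h
  ⟨b, hb, fun δ hδ => hbx δ (hδ.trans hγ)⟩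

open scoped Classical in
variable (S) in
def retraction (z : K κ) (x : K κ → K κ) : K κ → K κ :=
  fun β => if FollowsBranch S x β then x β else z

variable {z : K κ}

theorem retraction_nonexpanding : Nonexpanding (retraction S z) := by
  intro x y α h
  have hxy := resT_eq_resT_iff.1 h
  refine resT_eq_resT_iff.2 fun β hβ => ?_
  have hfol : FollowsBranch S x β ↔ FollowsBranch S y β := by
    refine exists_congr fun b => and_congr_right fun _ => forall₂_congr fun γ hγ => ?_
    rw [hxy γ (hγ.trans_lt hβ)]
  classical
  exact if_congr hfol (hxy β hβ) rfl

theorem retraction_of_mem_branches (hx : x ∈ branches κ S) : retraction S z x = x :=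
  funext fun _ => if_pos ⟨x, hx, fun _ _ => rfl⟩

theorem retraction_retraction : retraction S z (retraction S z x) = retraction S z x := by
  funext β
  by_cases hβ : FollowsBranch S x β
  · have hagree : ∀ γ ≤ β, retraction S z x γ = x γ := fun γ hγ => if_pos (hβ.mono hγ)
    obtain ⟨b, hb, hbx⟩ := hβ
    exact if_pos ⟨b, hb, fun γ hγ => (hbx γ hγ).trans (hagree γ hγ).symm⟩
  · simp [retraction, hβ]

def extendConst (z : K κ) (t : PreFun κ) : K κ → K κ :=
  fun β => if h : β < t.1 then t.2 ⟨β, h⟩ else z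

variable (S) in
def exitNodes : Set (PreFun κ) := S ∪ {t ∈ boundary κ S | IsLimitElt κ t.1}

theorem resT_mem_exitNodes (hS : (branches κ S).Nonempty) (h : ∀ δ < α, FollowsBranch S x δ) :
    resT κ x α ∈ exitNodes S := by
  by_cases hlim : IsLimitElt κ α
  · by_cases hxS : resT κ x α ∈ S
    · exact Or.inl hxS
    refine Or.inr ⟨⟨hxS, fun γ hγ => ?_⟩, hlim⟩
    obtain ⟨b, hb, hbx⟩ := h γ hγ
    rw [cut_resT (α := α) hγ.le]
    exact resT_mem_of_eqOn_lt hb fun δ hδ => hbx δ hδ.le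
  · obtain ⟨b, hb, hbx⟩ : ∃ b ∈ branches κ S, ∀ γ < α, b γ = x γ := by
      by_cases hα : ∃ β, β < α
      · obtain ⟨β, hβ, hpred⟩ : ∃ β < α, ∀ γ, β < γ → α ≤ γ := by
          simpa [IsLimitElt, hα] using hlim
        obtain ⟨b, hb, hbx⟩ := h β hβ
        exact ⟨b, hb, fun γ hγ => hbx γ (not_lt.1 fun h' => (hpred γ h').not_gt hγ)⟩
      · obtain ⟨b, hb⟩ := hS
        exact ⟨b, hb, fun γ hγ => absurd ⟨γ, hγ⟩ hα⟩
    exact Or.inl (resT_mem_of_eqOn_lt hb hbx)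

theorem mk_level_exitNodes_lt (hlev : ∀ α, #(level κ S α) < κ) (hthin : IsSuperthin κ S)
    (α : K κ) : #(level κ (exitNodes S) α) < κ := by
  by_cases hlim : IsLimitElt κ α
  · refine (mk_le_mk_of_subset ?_).trans_lt (hthin α hlim)
    rintro t ⟨ht | ⟨ht, -⟩, hα⟩
    exacts [⟨Or.inl ht, hα⟩, ⟨Or.inr ht, hα⟩]
  · refine (mk_le_mk_of_subset ?_).trans_lt (hlev α)
    rintro t ⟨ht | ⟨-, ht⟩, hα⟩
    exacts [⟨ht, hα⟩, (hlim (hα ▸ ht)).elim]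

theorem exists_resT_retraction_eq (hS : (branches κ S).Nonempty) (z : K κ) (x : K κ → K κ)
    (β : K κ) : ∃ t ∈ exitNodes S, t.1 ≤ β ∧
      resT κ (retraction S z x) β = resT κ (extendConst z t) β := by
  -- `α` is the point where `x` leaves the branches of `S`, capped at `β`
  obtain ⟨α, hαβ, hbelow, habove⟩ : ∃ α ≤ β, (∀ δ < α, FollowsBranch S x δ) ∧
      ∀ γ, α ≤ γ → γ < β → ¬ FollowsBranch S x γ := by
    let E := {δ | δ = β ∨ ¬ FollowsBranch S x δ}
    have hE : E.Nonempty := ⟨β, Or.inl rfl⟩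
    refine ⟨wellFounded_lt.min E hE, wellFounded_lt.min_le (show β ∈ E from Or.inl rfl),
      fun δ hδ => ?_, fun γ hαγ hγβ hγ => ?_⟩
    · by_contra h
      exact wellFounded_lt.not_lt_min E (Or.inr h) hδ
    · rcases wellFounded_lt.min_mem E hE with h | h
      exacts [(hαγ.trans_lt hγβ).ne h, h (hγ.mono hαγ)]
  refine ⟨resT κ x α, resT_mem_exitNodes hS hbelow, hαβ,
    resT_eq_resT_iff.2 fun γ hγ => ?_⟩
  by_cases hγα : γ < α
  · simp [retraction, extendConst, resT, hbelow γ hγα, hγα]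
  · simp [retraction, extendConst, resT, habove γ (not_lt.1 hγα) hγ, hγα]

theorem mk_level_rangeTree_retraction_lt (hκ : κ.IsRegular) (hS : (branches κ S).Nonempty)
    (hlev : ∀ α, #(level κ S α) < κ) (hthin : IsSuperthin κ S) (z : K κ) (β : K κ) :
    #(level κ (rangeTree (retraction S z)) β) < κ := by
  have hsub : level κ (rangeTree (retraction S z)) β ⊆
      (fun t => resT κ (extendConst z t) β) '' {t ∈ exitNodes S | t.1 ≤ β} := by
    rintro s ⟨⟨x, hx⟩, rfl⟩
    obtain ⟨t, ht, htβ, heq⟩ := exists_resT_retraction_eq hS z x s.1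
    exact ⟨t, ⟨ht, htβ⟩, heq.symm.trans hx⟩
  exact (mk_le_mk_of_subset hsub).trans_lt <|
    mk_image_le.trans_lt (mk_setOf_fst_le_lt hκ (mk_level_exitNodes_lt hlev hthin) β)

theorem IsKurepa.union_rangeTree_retraction (hκ : κ.IsRegular) (hSK : IsKurepa κ S)
    (hthin : IsSuperthin κ S) (z : K κ) : IsKurepa κ (S ∪ rangeTree (retraction S z)) := by
  have hne := hSK.branches_nonempty
  obtain ⟨hsub, hlev, hbr⟩ := hSK
  refine ⟨hsub.union isSubtree_rangeTree, fun α => ?_,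
    hbr.trans (mk_le_mk_of_subset (branches_mono subset_union_left))⟩
  rw [level_union]
  refine ⟨(hlev α).1.mono subset_union_left, (mk_union_le _ _).trans_lt ?_⟩
  exact add_lt_of_lt hκ.aleph0_le (hlev α).2 <|
    mk_level_rangeTree_retraction_lt hκ hne (fun β => (hlev β).2) hthin z α

end

theorem retract_kurepa_of_superthin_general
    (κ : Cardinal.{u}) (hreg : κ.IsRegular)
    (S : Set (PreFun κ)) (hSK : IsKurepa κ S) (hSthin : IsSuperthin κ S) :
    (∃ T : Set (PreFun κ), IsKurepa κ T ∧ IsRetract κ (branches κ T)) ∧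
    (IsPruned κ S →
      ∃ T : Set (PreFun κ), IsKurepa κ T ∧ IsRetract κ (branches κ T) ∧ S ⊆ T) := by
  have := Cardinal.noMaxOrder hreg.aleph0_le
  obtain ⟨z⟩ : Nonempty (K κ) := mk_ne_zero_iff.1 (by simpa using hreg.pos.ne')
  have hK := hSK.union_rangeTree_retraction hreg hSthin z
  have hR : IsRetract κ (branches κ (S ∪ rangeTree (retraction S z))) :=
    isRetract_branches_union_rangeTree hSK.1 retraction_nonexpanding
      (fun _ => retraction_retraction) fun _ => retraction_of_mem_branches
  exact ⟨⟨_, hK, hR⟩, fun _ => ⟨_, hK, hR, subset_union_left⟩⟩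

/-- Let `κ` be an uncountable regular cardinal.  If there is a
superthin `κ`-Kurepa subtree `S` of `^{<κ}κ`, then there is a `κ`-Kurepa subtree `T` of
`^{<κ}κ` such that `[T]` is a retract of `^κκ`; moreover, if `S` is pruned, then `T` can
be chosen with `S ⊆ T`. -/
theorem retract_kurepa_of_superthin
    (κ : Cardinal.{u}) (hκ : ℵ₀ < κ) (hreg : κ.IsRegular)
    (S : Set (PreFun κ)) (hSK : IsKurepa κ S) (hSthin : IsSuperthin κ S) :
    (∃ T : Set (PreFun κ), IsKurepa κ T ∧ IsRetract κ (branches κ T)) ∧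
    (IsPruned κ S →
      ∃ T : Set (PreFun κ), IsKurepa κ T ∧ IsRetract κ (branches κ T) ∧ S ⊆ T) :=
  retract_kurepa_of_superthin_general κ hreg S hSK hSthin

end GBaire
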